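/- arXiv:1003.4835 — 3 statements merged into one kernel-verified Lean document; each statement's English description precedes it below -/
import Mathlib

section
/- For p ∈ ℝ \ {0}, let P₂(p) := {((p+i)x, (p+i)y) : x, y ∈ ℝ} ⊂ ℂ², and let ℝ² := {(x,y) ∈ ℂ² : x, y ∈ ℝ}. There exists no invertible ℂ-linear map T : ℂ² → ℂ² such that T(ℝ²) = {(z,w) ∈ ℂ² : w = z̄} and T(P₂(p)) = {(z,w) ∈ ℂ² : w = r·z̄ + ρ·z} for some r, ρ ∈ ℝ with r ≠ 0 and (r,ρ) ≠ (1,0). -/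
open Complex Metric Set

def R2set : Set (ℂ × ℂ) := {v : ℂ × ℂ | v.1.im = 0 ∧ v.2.im = 0}

def P2 (p : ℝ) : Set (ℂ × ℂ) :=
  {v : ℂ × ℂ | ∃ x y : ℝ, v = (((p : ℂ) + Complex.I) * (x : ℂ), ((p : ℂ) + Complex.I) * (y : ℂ))}

def Graph1 : Set (ℂ × ℂ) := {v : ℂ × ℂ | v.2 = (starRingEnd ℂ) v.1}

def Graph2 (r ρ : ℝ) : Set (ℂ × ℂ) :=
  {v : ℂ × ℂ | v.2 = (r : ℂ) * (starRingEnd ℂ) v.1 + (ρ : ℂ) * v.1}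

/-!
By ℂ-linearity `T (P₂(p)) = (p + i) • T(ℝ²) = (p + i) • {w = z̄}`, i.e. the graph of
`z ↦ ((p + i) / (p - i)) z̄`. Comparing with `w = r z̄ + ρ z` at `z = 1` and `z = i` forces `ρ = 0`
and `p + i = r (p - i)` with `r` real, hence `r = -1` and `p = 0`.
-/

open scoped Pointwise ComplexConjugate

lemma P2_eq_smul_R2set (p : ℝ) : P2 p = ((p : ℂ) + I) • R2set := by
  ext v
  simp only [P2, R2set, mem_ofPred_eq, mem_smul_set, Prod.ext_iff, Prod.smul_fst, Prod.smul_snd,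
    smul_eq_mul]
  constructor
  · rintro ⟨x, y, hx, hy⟩
    exact ⟨((x : ℂ), (y : ℂ)), ⟨ofReal_im x, ofReal_im y⟩, hx.symm, hy.symm⟩
  · rintro ⟨⟨a, b⟩, ⟨ha, hb⟩, hx, hy⟩
    refine ⟨a.re, b.re, ?_, ?_⟩
    · rw [← hx, Complex.ext (ofReal_re a.re) ((ofReal_im _).trans ha.symm)]
    · rw [← hy, Complex.ext (ofReal_re b.re) ((ofReal_im _).trans hb.symm)]

lemma eq_zero_and_eq_mul_conj_of_smul_Graph1_subset {c : ℂ} {r ρ : ℝ} (hc : c ≠ 0)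
    (h : c • Graph1 ⊆ Graph2 r ρ) : ρ = 0 ∧ c = r * conj c := by
  have h1 : c = r * conj c + ρ * c := by
    simpa [Graph2] using h (smul_mem_smul_set (a := c) (show ((1 : ℂ), (1 : ℂ)) ∈ Graph1 by
      simp [Graph1]))
  have hI : c * -I = r * (conj c * -I) + ρ * (c * I) := by
    simpa [Graph2] using h (smul_mem_smul_set (a := c) (show (I, -I) ∈ Graph1 by simp [Graph1]))
  have hρc : (ρ : ℂ) * c = 0 := by
    linear_combination (I * hI - h1) / 2 + (c - r * conj c + ρ * c) / 2 * I_sq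
  have hρ : ρ = 0 := by exact_mod_cast (mul_eq_zero.mp hρc).resolve_right hc
  exact ⟨hρ, by simpa [hρ] using h1⟩

lemma eq_zero_of_ofReal_add_I_eq_mul_conj {p r : ℝ} (h : (p : ℂ) + I = r * conj ((p : ℂ) + I)) :
    p = 0 := by
  have hre : p = r * p := by simpa using congrArg re h
  have him : 1 = -r := by simpa using congrArg im h
  rw [show r = -1 by linarith] at hre
  linarith

/-- no invertible ℂ-linear map of ℂ² sends ℝ² to {w = z̄} and
P₂(p) to {w = r z̄ + ρ z} with r, ρ real, r ≠ 0, (r,ρ) ≠ (1,0). -/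
theorem no_linear_normalization_of_pair (p : ℝ) (hp : p ≠ 0) :
    ¬ ∃ (T : (ℂ × ℂ) ≃ₗ[ℂ] (ℂ × ℂ)) (r ρ : ℝ),
      r ≠ 0 ∧ (r, ρ) ≠ ((1 : ℝ), (0 : ℝ)) ∧
      (⇑T) '' R2set = Graph1 ∧ (⇑T) '' (P2 p) = Graph2 r ρ := by
  rintro ⟨T, r, ρ, -, -, hR2, hP2⟩
  have hsub : ((p : ℂ) + I) • Graph1 ⊆ Graph2 r ρ := by
    rw [← hR2, ← hP2, P2_eq_smul_R2set, image_smul_set]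
  have hne : (p : ℂ) + I ≠ 0 := fun h => by simpa using congrArg im h
  obtain ⟨-, hconj⟩ := eq_zero_and_eq_mul_conj_of_smul_Graph1_subset hne hsub
  exact hp (eq_zero_of_ofReal_add_I_eq_mul_conj hconj)
end

section
/- For p ∈ ℝ \ {0}, let P₂(p) := {((p+i)x, (p+i)y) : x, y ∈ ℝ} ⊂ ℂ², and let ℝ² := {(x,y) ∈ ℂ² : x, y ∈ ℝ}. There exists no invertible ℂ-linear map T : ℂ² → ℂ² such that T(P₂(p)) = {(z,w) ∈ ℂ² : w = z̄} and T(ℝ²) = {(z,w) ∈ ℂ² : w = r·z̄ + ρ·z} for some r, ρ ∈ ℝ with r ≠ 0 and (r,ρ) ≠ (1,0). -/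
open Complex Metric Set

open scoped Pointwise ComplexConjugate

lemma mul_ofReal_eq_conj_of_smul_Graph2_subset {c : ℂ} {r ρ : ℝ}
    (h : c • Graph2 r ρ ⊆ Graph1) : c * r = conj c := by
  have graph_mem (z : ℂ) : (z, (r : ℂ) * conj z + ρ * z) ∈ Graph2 r ρ := rfl
  have at_one := h (smul_mem_smul_set (graph_mem 1))
  have at_I := h (smul_mem_smul_set (graph_mem I))
  simp only [Graph1, mem_ofPred_eq, Prod.smul_fst, Prod.smul_snd, smul_eq_mul, map_mul,
    map_one, conj_I] at at_one at_I
  linear_combination (at_one + I * at_I - (c * (ρ - r) + conj c) * I_sq) / 2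

lemma eq_zero_of_add_I_mul_ofReal_eq_conj {p r : ℝ} (h : ((p : ℂ) + I) * r = conj ((p : ℂ) + I)) :
    p = 0 := by
  have hre := congrArg re h
  have him := congrArg im h
  simp only [mul_re, mul_im, add_re, add_im, ofReal_re, ofReal_im, I_re, I_im, conj_re,
    conj_im] at hre him
  have hr : r = -1 := by linarith
  subst hr
  linarith

/-- no invertible ℂ-linear map of ℂ² sends P₂(p) to {w = z̄} and
ℝ² to {w = r z̄ + ρ z} with r, ρ real, r ≠ 0, (r,ρ) ≠ (1,0). -/
theorem no_linear_normalization_of_pair_swapped (p : ℝ) (hp : p ≠ 0) :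
    ¬ ∃ (T : (ℂ × ℂ) ≃ₗ[ℂ] (ℂ × ℂ)) (r ρ : ℝ),
      r ≠ 0 ∧ (r, ρ) ≠ ((1 : ℝ), (0 : ℝ)) ∧
      (⇑T) '' (P2 p) = Graph1 ∧ (⇑T) '' R2set = Graph2 r ρ := by
  rintro ⟨T, r, ρ, -, -, hP, hR⟩
  have hGraph : ((p : ℂ) + I) • Graph2 r ρ = Graph1 := by
    rw [← hP, ← hR, P2_eq_smul_R2set, image_smul_set]
  exact hp (eq_zero_of_add_I_mul_ofReal_eq_conj
    (mul_ofReal_eq_conj_of_smul_Graph2_subset hGraph.subset))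
end

section
/- For every p ∈ ℝ \ {0}, the set P₂(p) := {((p+i)x, (p+i)y) : x, y ∈ ℝ} ⊂ ℂ² is a totally-real plane, P₂(p) ∩ ℝ² = {0} where ℝ² := {(x,y) ∈ ℂ² : x, y ∈ ℝ}, and ℝ² ∪ P₂(p) is locally polynomially convex at the origin. -/
open Complex Metric Set

noncomputable def pEval (P : MvPolynomial (Fin 2) ℂ) (z : ℂ × ℂ) : ℂ :=
  MvPolynomial.eval ![z.1, z.2] P

def PolyConvex (K : Set (ℂ × ℂ)) : Prop :=
  {z : ℂ × ℂ | ∀ P : MvPolynomial (Fin 2) ℂ,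
      ‖pEval P z‖ ≤ ⨆ w ∈ K, ‖pEval P w‖} = K

def LocPolyConvexAt (X : Set (ℂ × ℂ)) (p : ℂ × ℂ) : Prop :=
  ∃ r > 0, ∀ ρ : ℝ, 0 < ρ → ρ ≤ r → PolyConvex (X ∩ closedBall p ρ)

def TotallyRealSub (T : Submodule ℝ (ℂ × ℂ)) : Prop :=
  ∀ v ∈ T, Complex.I • v ∈ T → v = 0

def IsTangentAt (k : ℕ∞) (S : Set (ℂ × ℂ)) (p : ℂ × ℂ) (T : Submodule ℝ (ℂ × ℂ)) : Prop :=
  ∃ (U : Set (ℝ × ℝ)) (f : ℝ × ℝ → ℂ × ℂ) (u : ℝ × ℝ),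
    IsOpen U ∧ u ∈ U ∧ f u = p ∧
    ContDiffOn ℝ k f U ∧ Set.InjOn f U ∧
    (∀ v ∈ U, Function.Injective (fderiv ℝ f v)) ∧
    (∃ V ∈ nhds p, S ∩ V = (f '' U) ∩ V) ∧
    T = LinearMap.range ((fderiv ℝ f u) : (ℝ × ℝ) →ₗ[ℝ] (ℂ × ℂ))

def IsCkSurface (k : ℕ∞) (S : Set (ℂ × ℂ)) : Prop :=
  ∀ p ∈ S, ∃ T, IsTangentAt k S p T

def IsTotallyRealCkSurface (k : ℕ∞) (S : Set (ℂ × ℂ)) : Prop :=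
  ∀ p ∈ S, ∃ T, IsTangentAt k S p T ∧ TotallyRealSub T

def IsTotallyRealPlane (M : Submodule ℝ (ℂ × ℂ)) : Prop :=
  Module.finrank ℝ M = 2 ∧ TotallyRealSub M

/-!
Write `c = p + i`, so that `P₂(p) = c ℝ²` and `c²` is not real because `p ≠ 0`. Let `z` be in
the polynomial hull of `K = (ℝ² ∪ c ℝ²) ∩ B̄(0, ρ)`; the coordinate functions put `z` in the
ball. Each of the linear forms `ℓ = z₁, z₂, z₁ + z₂` maps `ℝ²` and `c ℝ²` into the lines `ℝ`
and `c ℝ`, so `ℓ²` maps `K` into the rays `ℝ≥0 ∪ ℝ≥0 c²`. The polynomials `1 - ε β ℓ²ⁿ` show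
that `ℓ(z)²ⁿ` lies in every closed half-plane through `0` containing `1` and `c²ⁿ`. For `n = 1`
this puts `ℓ(z)²` in the sector between the two rays, and for the first `n` with
`π ≤ n |arg c²|` it excludes the open sector. Hence `ℓ(z) ∈ ℝ ∪ c ℝ` for the three forms; as
`z₁ + z₂` lies on neither line when `z₁` and `z₂` lie on different ones, `z ∈ ℝ² ∪ c ℝ²`.
-/

open ComplexConjugate

open scoped Real

lemma Submodule.mem_prod_or_mem_prod_of_add_mem {R M : Type*} [Ring R] [AddCommGroup M]
    [Module R M] {A B : Submodule R M} {x y : M} (hx : x ∈ A ∨ x ∈ B) (hy : y ∈ A ∨ y ∈ B)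
    (hxy : x + y ∈ A ∨ x + y ∈ B) : (x, y) ∈ A.prod A ∨ (x, y) ∈ B.prod B := by
  simp only [Submodule.mem_prod]
  rcases hx with hx | hx <;> rcases hy with hy | hy
  · exact Or.inl ⟨hx, hy⟩
  · refine hxy.imp (fun h => ⟨hx, ?_⟩) fun h => ⟨?_, hy⟩
    · simpa using A.sub_mem h hx
    · simpa using B.sub_mem h hy
  · refine hxy.imp (fun h => ⟨?_, hy⟩) fun h => ⟨hx, ?_⟩
    · simpa using A.sub_mem h hy
    · simpa using B.sub_mem h hx
  · exact Or.inr ⟨hx, hy⟩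

lemma Submodule.finrank_prod {K V : Type*} [DivisionRing K] [AddCommGroup V] [Module K V]
    (A B : Submodule K V) [FiniteDimensional K A] [FiniteDimensional K B] :
    Module.finrank K (A.prod B) = Module.finrank K A + Module.finrank K B := by
  rw [← A.range_subtype, ← B.range_subtype, ← LinearMap.range_prodMap,
    LinearMap.finrank_range_of_inj (Subtype.val_injective.prodMap Subtype.val_injective),
    Module.finrank_prod, A.range_subtype, B.range_subtype]

lemma Submodule.coe_prod_inter_coe_prod {R M : Type*} [Ring R] [AddCommGroup M] [Module R M]
    {A B : Submodule R M} (h : Disjoint A B) : (A.prod A : Set (M × M)) ∩ B.prod B = {0} := by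
  rw [← Submodule.coe_inf, Submodule.prod_inf_prod, h.eq_bot, Submodule.prod_bot,
    Submodule.bot_coe]

namespace Complex

lemma mem_span_iff_exists_eq_mul {c w : ℂ} : w ∈ ℝ ∙ c ↔ ∃ x : ℝ, w = c * x := by
  simp [Submodule.mem_span_singleton, real_smul, mul_comm, eq_comm]

lemma mem_span_one_iff {w : ℂ} : w ∈ ℝ ∙ (1 : ℂ) ↔ w.im = 0 := by
  rw [mem_span_iff_exists_eq_mul]
  exact ⟨by rintro ⟨x, rfl⟩; simp, fun h => ⟨w.re, by simp [Complex.ext_iff, h]⟩⟩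

lemma disjoint_span_span_one {c : ℂ} (hc : c.im ≠ 0) : Disjoint (ℝ ∙ c) (ℝ ∙ (1 : ℂ)) := by
  rw [Submodule.disjoint_def]
  rintro w hw hw₁
  obtain ⟨x, rfl⟩ := mem_span_iff_exists_eq_mul.1 hw
  have hx : x = 0 := by simpa [mem_span_one_iff, hc] using hw₁
  simp [hx]

lemma eq_zero_of_mem_span_of_I_mul_mem {c w : ℂ} (hc : c ≠ 0) (hw : w ∈ ℝ ∙ c)
    (hIw : I * w ∈ ℝ ∙ c) : w = 0 := by
  obtain ⟨x, rfl⟩ := mem_span_iff_exists_eq_mul.1 hw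
  obtain ⟨y, hy⟩ := mem_span_iff_exists_eq_mul.1 hIw
  have : (y : ℂ) = I * x := mul_left_cancel₀ hc (by rw [← hy]; ring)
  have hx : x = 0 := by simpa [eq_comm] using congrArg im this
  simp [hx]

lemma re_mul_sq_pow_nonneg {c w β : ℂ} (hw : w ∈ ℝ ∙ c) (n : ℕ)
    (h : 0 ≤ (β * (c ^ 2) ^ n).re) : 0 ≤ (β * (w ^ 2) ^ n).re := by
  obtain ⟨x, rfl⟩ := mem_span_iff_exists_eq_mul.1 hw
  have : β * ((c * x) ^ 2) ^ n = ((x ^ 2) ^ n : ℝ) * (β * (c ^ 2) ^ n) := by push_cast; ring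
  rw [this, re_ofReal_mul]
  positivity

lemma mem_span_of_sq_eq {c w : ℂ} {t : ℝ} (ht : 0 ≤ t) (h : w ^ 2 = t * c ^ 2) : w ∈ ℝ ∙ c := by
  rw [mem_span_iff_exists_eq_mul]
  have : w ^ 2 = (c * (Real.sqrt t : ℝ)) ^ 2 := by
    rw [h, mul_pow, ← ofReal_pow, Real.sq_sqrt ht, mul_comm]
  rcases sq_eq_sq_iff_eq_or_eq_neg.1 this with h | h
  · exact ⟨_, h⟩
  · exact ⟨-Real.sqrt t, by rw [h]; push_cast; ring⟩

end Complex

/-- `u` lies in every closed half-plane bounded by a line through `0` that contains `1` and `e`. -/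
def InHalfPlaneHull (e u : ℂ) : Prop :=
  ∀ β : ℂ, 0 ≤ β.re → 0 ≤ (β * e).re → 0 ≤ (β * u).re

namespace InHalfPlaneHull

variable {e u : ℂ}

lemma map_conj (h : InHalfPlaneHull e u) : InHalfPlaneHull (conj e) (conj u) := by
  intro β hβ hβe
  have := h (conj β) (by rwa [conj_re]) (by rwa [← conj_conj e, ← map_mul, conj_re])
  rwa [← conj_conj u, ← map_mul, conj_re] at this

lemma im_nonneg (h : InHalfPlaneHull e u) (he : 0 ≤ e.im) :
    0 ≤ u.im ∧ (conj e * u).im ≤ 0 := by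
  have h₁ := h (-I) (by simp) (by simpa using he)
  have h₂ := h (I * conj e) (by simpa using he) (by simp [mul_assoc, conj_mul', ← ofReal_pow])
  constructor
  · simpa using h₁
  · simp [mul_re, mul_im] at h₂ ⊢
    linarith

lemma im_nonpos (h : InHalfPlaneHull e u) (he : e.im ≤ 0) :
    u.im ≤ 0 ∧ 0 ≤ (conj e * u).im := by
  obtain ⟨h₁, h₂⟩ := h.map_conj.im_nonneg (by simpa using he)
  refine ⟨by simpa using h₁, ?_⟩
  rw [conj_conj, ← conj_conj (e * _), map_mul, conj_conj] at h₂
  simpa [mul_comm] using h₂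

end InHalfPlaneHull

namespace Complex

lemma im_ofReal_mul_exp_pow (r α : ℝ) (k : ℕ) :
    ((r * exp (α * I)) ^ k).im = r ^ k * Real.sin (k * α) := by
  rw [mul_pow, ← exp_nat_mul, ← mul_assoc, ← ofReal_pow, ← ofReal_natCast, ← ofReal_mul,
    im_ofReal_mul, exp_ofReal_mul_I_im]

lemma im_pow (w : ℂ) (k : ℕ) : (w ^ k).im = ‖w‖ ^ k * Real.sin (k * arg w) := by
  conv_lhs => rw [← norm_mul_exp_arg_mul_I w]
  exact im_ofReal_mul_exp_pow _ _ _

lemma im_conj_pow_mul_pow (d u : ℂ) (k : ℕ) :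
    ((conj d) ^ k * u ^ k).im = (‖d‖ * ‖u‖) ^ k * Real.sin (k * (arg u - arg d)) := by
  have polar : conj d * u = ↑(‖d‖ * ‖u‖) * exp (↑(arg u - arg d) * I) := by
    conv_lhs => rw [← norm_mul_exp_arg_mul_I d, ← norm_mul_exp_arg_mul_I u]
    rw [map_mul, conj_ofReal, ← exp_conj]
    simp only [map_mul, conj_ofReal, conj_I]
    rw [ofReal_mul, ofReal_sub, sub_mul, sub_eq_neg_add, exp_add]
    ring_nf
  rw [← mul_pow, polar, im_ofReal_mul_exp_pow]

lemma arg_pos_of_im_pos {d : ℂ} (hd : 0 < d.im) : 0 < arg d :=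
  (arg_nonneg_iff.2 hd.le).lt_of_ne fun h => hd.ne' (arg_eq_zero_iff.1 h.symm).2

end Complex

lemma InHalfPlaneHull.arg_mem_Icc {d u : ℂ} (h : InHalfPlaneHull d u) (hd : 0 < d.im) :
    arg u ∈ Icc 0 (arg d) := by
  obtain ⟨hu, hdu⟩ := h.im_nonneg hd.le
  refine ⟨arg_nonneg_iff.2 hu, le_of_not_gt fun hlt => ?_⟩
  have hθ := arg_pos_of_im_pos hd
  have hu0 : u ≠ 0 := by rintro rfl; simp at hlt; linarith
  have hsin : 0 < Real.sin (arg u - arg d) :=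
    Real.sin_pos_of_pos_of_lt_pi (by linarith) (by linarith [arg_le_pi u])
  have := im_conj_pow_mul_pow d u 1
  rw [pow_one, pow_one, pow_one, Nat.cast_one, one_mul] at this
  have : 0 < (conj d * u).im := by
    rw [this]
    exact mul_pos (mul_pos (norm_pos_iff.2 (by rintro rfl; simp at hd)) (norm_pos_iff.2 hu0)) hsin
  linarith

lemma exists_not_inHalfPlaneHull_pow {d u : ℂ} (hd : 0 < d.im) (hu : 0 < arg u)
    (hud : arg u < arg d) : ∃ k : ℕ, ¬InHalfPlaneHull (d ^ k) (u ^ k) := by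
  set θ := arg d
  set φ := arg u
  have hθ : 0 < θ := arg_pos_of_im_pos hd
  have hθπ : θ < π := arg_lt_pi_iff.2 (Or.inr hd.ne')
  -- the first power of `d` leaving the open upper half-plane: `π ≤ k θ < π + θ`
  set k := ⌈π / θ⌉₊
  have hk : 0 < k := Nat.ceil_pos.2 (by positivity)
  have hkθ : π ≤ k * θ := (div_le_iff₀ hθ).1 (Nat.le_ceil _)
  have hkθ' : k * θ < π + θ := by
    have := Nat.ceil_lt_add_one (div_pos Real.pi_pos hθ).le
    rwa [← lt_div_iff₀ hθ, add_div, div_self hθ.ne']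
  refine ⟨k, fun h => ?_⟩
  have hdk : (d ^ k).im ≤ 0 := by
    rw [im_pow, ← Real.sin_sub_two_pi]
    exact mul_nonpos_of_nonneg_of_nonpos (by positivity)
      (Real.sin_nonpos_of_nonpos_of_neg_pi_le (by linarith) (by linarith))
  obtain ⟨h₁, h₂⟩ := h.im_nonpos hdk
  rw [im_pow] at h₁
  rw [map_pow, im_conj_pow_mul_pow] at h₂
  have hu0 : u ≠ 0 := by rintro rfl; simp [φ] at hu
  have hd0 : d ≠ 0 := by rintro rfl; simp at hd
  have hsin₁ : Real.sin (k * φ) ≤ 0 :=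
    nonpos_of_mul_nonpos_right h₁ (pow_pos (norm_pos_iff.2 hu0) k)
  have hsin₂ : 0 ≤ Real.sin (k * (φ - θ)) :=
    nonneg_of_mul_nonneg_right h₂ (pow_pos (mul_pos (norm_pos_iff.2 hd0) (norm_pos_iff.2 hu0)) k)
  have hkpos : (0 : ℝ) < k := by exact_mod_cast hk
  have hkφ : π ≤ k * φ := le_of_not_gt fun hlt =>
    hsin₁.not_gt (Real.sin_pos_of_pos_of_lt_pi (by positivity) hlt)
  have hkφθ : k * (φ - θ) ≤ -π := le_of_not_gt fun hlt =>
    hsin₂.not_gt (Real.sin_neg_of_neg_of_neg_pi_lt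
      (mul_neg_of_pos_of_neg hkpos (by linarith)) hlt)
  nlinarith

lemma exists_eq_or_eq_mul_of_forall_pow_of_im_pos {d u : ℂ} (hd : 0 < d.im)
    (H : ∀ n : ℕ, InHalfPlaneHull (d ^ n) (u ^ n)) :
    ∃ t : ℝ, 0 ≤ t ∧ (u = t ∨ u = t * d) := by
  have hd0 : d ≠ 0 := by rintro rfl; simp at hd
  obtain ⟨h₀, h₁⟩ := (by simpa using H 1 : InHalfPlaneHull d u).arg_mem_Icc hd
  rcases h₀.eq_or_lt with h₀ | h₀
  · obtain ⟨hre, him⟩ := arg_eq_zero_iff.1 h₀.symm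
    exact ⟨u.re, hre, Or.inl (Complex.ext (by simp) (by simpa using him))⟩
  rcases h₁.eq_or_lt with h₁ | h₁
  · have hu0 : u ≠ 0 := by rintro rfl; simp at h₀
    refine ⟨‖u‖ / ‖d‖, by positivity, Or.inr ?_⟩
    push_cast
    exact ((arg_eq_arg_iff hd0 hu0).1 h₁.symm).symm
  · obtain ⟨k, hk⟩ := exists_not_inHalfPlaneHull_pow hd h₀ h₁
    exact absurd (H k) hk

lemma exists_eq_or_eq_mul_of_forall_pow {d u : ℂ} (hd : d.im ≠ 0)
    (H : ∀ n : ℕ, InHalfPlaneHull (d ^ n) (u ^ n)) :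
    ∃ t : ℝ, 0 ≤ t ∧ (u = t ∨ u = t * d) := by
  rcases hd.lt_or_gt with hd | hd
  · obtain ⟨t, ht, h⟩ := exists_eq_or_eq_mul_of_forall_pow_of_im_pos (d := conj d) (u := conj u)
      (by simpa using hd) fun n => by simpa using (H n).map_conj
    refine ⟨t, ht, h.imp (fun h => ?_) fun h => ?_⟩ <;> apply (starRingEnd ℂ).injective <;>
      simpa using h
  · exact exists_eq_or_eq_mul_of_forall_pow_of_im_pos hd H

def polyHull (K : Set (ℂ × ℂ)) : Set (ℂ × ℂ) :=
  {z | ∀ P : MvPolynomial (Fin 2) ℂ, ‖pEval P z‖ ≤ ⨆ w ∈ K, ‖pEval P w‖}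

section polyHull

variable {K : Set (ℂ × ℂ)} {z : ℂ × ℂ}

lemma continuous_pEval (P : MvPolynomial (Fin 2) ℂ) : Continuous (pEval P) :=
  (MvPolynomial.continuous_eval P).comp <| continuous_pi fun i => by
    fin_cases i
    exacts [continuous_fst, continuous_snd]

lemma exists_norm_pEval_le (hK : Bornology.IsBounded K) (P : MvPolynomial (Fin 2) ℂ) :
    ∃ M, ∀ w ∈ K, ‖pEval P w‖ ≤ M :=
  (hK.isCompact_closure.exists_bound_of_continuousOn (continuous_pEval P).continuousOn).imp
    fun _ hM w hw => hM w (subset_closure hw)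

lemma subset_polyHull (hK : Bornology.IsBounded K) : K ⊆ polyHull K := fun z hz P => by
  obtain ⟨M, hM⟩ := exists_norm_pEval_le hK P
  refine le_ciSup₂ (f := fun w (_ : w ∈ K) => ‖pEval P w‖) ⟨M, ?_⟩ z hz
  simp only [mem_upperBounds, mem_iUnion, mem_range]
  rintro _ ⟨w, hw, rfl⟩
  exact hM w hw

lemma polyConvex_of_polyHull_subset (hK : Bornology.IsBounded K) (h : polyHull K ⊆ K) :
    PolyConvex K :=
  h.antisymm (subset_polyHull hK)

lemma norm_pEval_le_of_mem_polyHull (hz : z ∈ polyHull K) {P : MvPolynomial (Fin 2) ℂ} {M : ℝ}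
    (hM : 0 ≤ M) (h : ∀ w ∈ K, ‖pEval P w‖ ≤ M) : ‖pEval P z‖ ≤ M :=
  (hz P).trans <| Real.iSup_le (fun w => Real.iSup_le (h w) hM) hM

lemma polyHull_subset_closedBall {ρ : ℝ} (hρ : 0 ≤ ρ) (hK : K ⊆ closedBall 0 ρ) :
    polyHull K ⊆ closedBall 0 ρ := fun z hz => by
  have hcoord (i : Fin 2) : ‖pEval (MvPolynomial.X i) z‖ ≤ ρ :=
    norm_pEval_le_of_mem_polyHull hz hρ fun w hw => by
      have := mem_closedBall_zero_iff.1 (hK hw)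
      fin_cases i
      · simpa [pEval] using (norm_prod_le_iff.1 this).1
      · simpa [pEval] using (norm_prod_le_iff.1 this).2
  simpa [pEval, norm_prod_le_iff] using And.intro (hcoord 0) (hcoord 1)

lemma norm_one_sub_mul_sq_le {x : ℂ} {ε : ℝ} (hε : 0 ≤ ε) (hx : 0 ≤ x.re) :
    ‖1 - ε * x‖ ^ 2 ≤ 1 + ε ^ 2 * ‖x‖ ^ 2 := by
  simp only [Complex.sq_norm, normSq_apply, sub_re, sub_im, one_re, one_im, re_ofReal_mul,
    im_ofReal_mul]
  nlinarith [mul_nonneg hε hx]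

lemma re_pEval_nonneg_of_mem_polyHull (hK : Bornology.IsBounded K) (hz : z ∈ polyHull K)
    {Q : MvPolynomial (Fin 2) ℂ} (hQ : ∀ w ∈ K, 0 ≤ (pEval Q w).re) : 0 ≤ (pEval Q z).re := by
  by_contra! hneg
  obtain ⟨M, hM⟩ := exists_norm_pEval_le hK Q
  set a := -(pEval Q z).re
  have ha : 0 < a := by linarith
  set N := max M 1
  have hN : 0 < N := lt_max_of_lt_right one_pos
  -- `1 - ε Q` with `ε = a / N²` stays below `1 + ε a / 2` on `K` but is `≥ 1 + ε a` at `z`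
  set ε := a / N ^ 2
  have hε : 0 < ε := by positivity
  have hεN : ε ^ 2 * N ^ 2 = ε * a := by simp only [ε]; field_simp
  have hP (w : ℂ × ℂ) : pEval (1 - MvPolynomial.C (ε : ℂ) * Q) w = 1 - ε * pEval Q w := by
    simp [pEval]
  have hK' : ∀ w ∈ K, ‖pEval (1 - MvPolynomial.C (ε : ℂ) * Q) w‖ ≤ 1 + ε * a / 2 := by
    intro w hw
    have hx : ε ^ 2 * ‖pEval Q w‖ ^ 2 ≤ ε ^ 2 * N ^ 2 := by
      gcongr
      exact (hM w hw).trans (le_max_left _ _)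
    have := norm_one_sub_mul_sq_le hε.le (hQ w hw)
    rw [hP]
    nlinarith [norm_nonneg (1 - ε * pEval Q w), mul_pos hε ha]
  have hz' : 1 + ε * a ≤ ‖pEval (1 - MvPolynomial.C (ε : ℂ) * Q) z‖ := by
    refine le_trans (le_of_eq ?_) (re_le_norm _)
    rw [hP, sub_re, re_ofReal_mul, one_re]
    ring
  linarith [norm_pEval_le_of_mem_polyHull hz (by positivity) hK', mul_pos hε ha]

end polyHull

lemma mem_span_or_mem_span_of_mem_polyHull {K : Set (ℂ × ℂ)} (hK : Bornology.IsBounded K)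
    {c : ℂ} (hc : (c ^ 2).im ≠ 0) {L : MvPolynomial (Fin 2) ℂ}
    (hL : ∀ w ∈ K, pEval L w ∈ ℝ ∙ (1 : ℂ) ∨ pEval L w ∈ ℝ ∙ c) {z : ℂ × ℂ}
    (hz : z ∈ polyHull K) : pEval L z ∈ ℝ ∙ (1 : ℂ) ∨ pEval L z ∈ ℝ ∙ c := by
  have hpow (β : ℂ) (n : ℕ) (w : ℂ × ℂ) :
      pEval (MvPolynomial.C β * L ^ (2 * n)) w = β * (pEval L w ^ 2) ^ n := by
    simp [pEval, pow_mul]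
  have H (n : ℕ) : InHalfPlaneHull ((c ^ 2) ^ n) ((pEval L z ^ 2) ^ n) := fun β hβ hβc => by
    rw [← hpow]
    refine re_pEval_nonneg_of_mem_polyHull hK hz fun w hw => ?_
    rw [hpow]
    rcases hL w hw with h | h
    · exact re_mul_sq_pow_nonneg h n (by simpa using hβ)
    · exact re_mul_sq_pow_nonneg h n hβc
  obtain ⟨t, ht, h | h⟩ := exists_eq_or_eq_mul_of_forall_pow hc H
  · exact Or.inl (mem_span_of_sq_eq ht (by simpa using h))
  · exact Or.inr (mem_span_of_sq_eq ht h)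

theorem polyConvex_prod_span_union_inter_closedBall {c : ℂ} (hc : (c ^ 2).im ≠ 0) {ρ : ℝ}
    (hρ : 0 ≤ ρ) : PolyConvex ((((ℝ ∙ (1 : ℂ)).prod (ℝ ∙ (1 : ℂ)) : Set (ℂ × ℂ)) ∪
      (ℝ ∙ c).prod (ℝ ∙ c)) ∩ closedBall 0 ρ) := by
  set K := (((ℝ ∙ (1 : ℂ)).prod (ℝ ∙ (1 : ℂ)) : Set (ℂ × ℂ)) ∪ (ℝ ∙ c).prod (ℝ ∙ c)) ∩
    closedBall 0 ρ
  have hK : Bornology.IsBounded K := isBounded_closedBall.subset inter_subset_right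
  refine polyConvex_of_polyHull_subset hK fun z hz =>
    ⟨?_, polyHull_subset_closedBall hρ inter_subset_right hz⟩
  have hline (L : MvPolynomial (Fin 2) ℂ)
      (hL : ∀ (S : Submodule ℝ ℂ) (w : ℂ × ℂ), w ∈ S.prod S → pEval L w ∈ S) :
      pEval L z ∈ ℝ ∙ (1 : ℂ) ∨ pEval L z ∈ ℝ ∙ c :=
    mem_span_or_mem_span_of_mem_polyHull hK hc (fun w hw => hw.1.imp (hL _ w) (hL _ w)) hz
  have h₁ := hline (MvPolynomial.X 0) fun S w hw => by simpa [pEval] using hw.1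
  have h₂ := hline (MvPolynomial.X 1) fun S w hw => by simpa [pEval] using hw.2
  have h₁₂ := hline (MvPolynomial.X 0 + MvPolynomial.X 1) fun S w hw => by
    simpa [pEval] using S.add_mem hw.1 hw.2
  simp only [pEval, map_add, MvPolynomial.eval_X, Matrix.cons_val_zero,
    Matrix.cons_val_one] at h₁ h₂ h₁₂
  exact Submodule.mem_prod_or_mem_prod_of_add_mem h₁ h₂ h₁₂

lemma R2set_eq : R2set = (ℝ ∙ (1 : ℂ)).prod (ℝ ∙ (1 : ℂ)) := by
  ext v
  simp [R2set, mem_span_one_iff]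

lemma P2_eq (p : ℝ) : P2 p = (ℝ ∙ ((p : ℂ) + I)).prod (ℝ ∙ ((p : ℂ) + I)) := by
  ext ⟨v₁, v₂⟩
  simp [P2, mem_span_iff_exists_eq_mul]

lemma isTotallyRealPlane_prod_span {c : ℂ} (hc : c ≠ 0) :
    IsTotallyRealPlane ((ℝ ∙ c).prod (ℝ ∙ c)) := by
  refine ⟨?_, fun v hv hIv => ?_⟩
  · rw [Submodule.finrank_prod, finrank_span_singleton hc]
  · exact Prod.ext (eq_zero_of_mem_span_of_I_mul_mem hc hv.1 hIv.1)
      (eq_zero_of_mem_span_of_I_mul_mem hc hv.2 hIv.2)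

/-- for every p ∈ ℝ \ {0}, P₂(p) is a totally-real plane meeting ℝ² only
at 0, and ℝ² ∪ P₂(p) is locally polynomially convex at the origin. -/
theorem P2_totallyReal_and_union_locPolyConvex (p : ℝ) (hp : p ≠ 0) :
    (∃ M : Submodule ℝ (ℂ × ℂ), (M : Set (ℂ × ℂ)) = P2 p ∧ IsTotallyRealPlane M) ∧
    P2 p ∩ R2set = {(0 : ℂ × ℂ)} ∧
    LocPolyConvexAt (R2set ∪ P2 p) 0 := by
  have him : ((p : ℂ) + I).im ≠ 0 := by simp
  have hsq : (((p : ℂ) + I) ^ 2).im ≠ 0 := by simpa [sq] using hp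
  rw [P2_eq, R2set_eq]
  refine ⟨⟨_, rfl, isTotallyRealPlane_prod_span fun h => by simp [h] at him⟩,
    Submodule.coe_prod_inter_coe_prod (disjoint_span_span_one him),
    1, one_pos, fun ρ hρ _ => polyConvex_prod_span_union_inter_closedBall hsq hρ.le⟩
end
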